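/- Let x ∈ J with supp(x) = ℕ and let (Aₙ) be a sequence of nonempty finite subsets of ℕ converging pointwise (as indicator functions) to A ⊆ ℕ. Then ‖x‖_{Aₙ} → ‖x‖_A, where for B ⊆ ℕ, ‖x‖_B denotes the quantity (∑ᵢ |∑_{k∈Iᵢ} x(k)|²)^{1/2} computed with the partition of ℕ into consecutive intervals determined by the cut points of B. -/

import Mathlib

open Filter Topology Classical

noncomputable section

/-- Admissible finite families of pairwise disjoint, increasingly ordered intervals
`[f i .1, f i .2]` of `ℕ`. -/
def Admissible (n : ℕ) (f : Fin n → ℕ × ℕ) : Prop :=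
  (∀ i, (f i).1 ≤ (f i).2) ∧ ∀ i j : Fin n, i < j → (f i).2 < (f j).1

/-- The set of estimates appearing in the definition of the James norm. -/
def estimates (x : ℕ → ℝ) : Set ℝ :=
  {r | ∃ n, ∃ f : Fin n → ℕ × ℕ, Admissible n f ∧
    r = Real.sqrt (∑ i, (∑ k ∈ Finset.Icc (f i).1 (f i).2, x k) ^ 2)}

/-- `x` belongs to the James space `J`. -/
def MemJ (x : ℕ → ℝ) : Prop := BddAbove (estimates x)

/-- The James norm. -/
def jamesNorm (x : ℕ → ℝ) : ℝ := sSup (estimates x)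

/-- The ℓ² norm. -/
def l2Norm (x : ℕ → ℝ) : ℝ := Real.sqrt (∑' k, (x k) ^ 2)

/-- The closed unit ball of the James space. -/
def ballJ : Set (ℕ → ℝ) := {x | MemJ x ∧ jamesNorm x ≤ 1}

/-- The support of a sequence. -/
def supp (x : ℕ → ℝ) : Set ℕ := {n | x n ≠ 0}

/-- The (possibly infinite) sum of `x` over a subset `I` of `ℕ`,
as the limit of the partial sums. -/
def setSum (x : ℕ → ℝ) (I : Set ℕ) : ℝ :=
  limUnder atTop (fun N => ∑ k ∈ Finset.range N, if k ∈ I then x k else 0)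

/-- An `x`-norming family: a (finite or infinite) family of pairwise disjoint
nonempty intervals of `ℕ`, indexed by an initial segment `F` of `ℕ`, ordered
increasingly, whose interval sums exist and realize the James norm of `x`. -/
structure NormingFamily (x : ℕ → ℝ) where
  F : Set ℕ
  F_nonempty : F.Nonempty
  initial : ∀ ⦃m n : ℕ⦄, m ≤ n → n ∈ F → m ∈ F
  I : ℕ → Set ℕ
  I_nonempty : ∀ i ∈ F, (I i).Nonempty
  I_interval : ∀ i ∈ F, (I i).OrdConnected
  ordered : ∀ i ∈ F, ∀ j ∈ F, i < j → ∀ a ∈ I i, ∀ b ∈ I j, a < b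
  sums_exist : ∀ i ∈ F, ∃ l : ℝ,
    Tendsto (fun N => ∑ k ∈ Finset.range N, if k ∈ I i then x k else 0) atTop (𝓝 l)
  norming : ∑' i : F, (setSum x (I i)) ^ 2 = (jamesNorm x) ^ 2

/-- An `x`-norming partition: an `x`-norming family whose intervals cover the
support of `x`, every interval has its minimum in the support, every non-final
interval has its maximum in the support, and the final interval does not extend
beyond the supremum of the support. -/
structure NormingPartition (x : ℕ → ℝ) extends NormingFamily x where
  covers : supp x ⊆ ⋃ i ∈ F, I i
  min_in_supp : ∀ i ∈ F, ∃ m ∈ I i ∩ supp x, ∀ k ∈ I i, m ≤ k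
  max_in_supp : ∀ i ∈ F, (∃ j ∈ F, i < j) → ∃ m ∈ I i ∩ supp x, ∀ k ∈ I i, k ≤ m
  bounded_by_supp : ∀ i ∈ F, ∀ k ∈ I i, ∃ m ∈ supp x, k ≤ m

/-- `n₁ < n₂` are consecutive elements of the support of `x`. -/
def Consecutive (x : ℕ → ℝ) (n₁ n₂ : ℕ) : Prop :=
  n₁ ∈ supp x ∧ n₂ ∈ supp x ∧ n₁ < n₂ ∧ ∀ k, n₁ < k → k < n₂ → x k = 0

end

/-- The `i`-th block of the partition of `ℕ` into consecutive intervals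
determined by the cut points `B`: the elements `k` such that exactly `i`
elements of `B` lie strictly below `k`. -/
noncomputable def cutBlock (B : Set ℕ) (i : ℕ) : Set ℕ := {k | (B ∩ Set.Iio k).ncard = i}

/-- The norm estimate associated to a set `B` of cut points. -/
noncomputable def normEst (x : ℕ → ℝ) (B : Set ℕ) : ℝ :=
  Real.sqrt (∑' i : ℕ, (setSum x (cutBlock B i)) ^ 2)

/-! For `x ∈ J`, the square sums of admissible families of intervals lying beyond `K` tend to `0`
as `K → ∞`: otherwise infinitely many disjoint families, each with square sum at least `ε`, could
be concatenated, contradicting `‖x‖_J < ∞`. So fix `K` such that these square sums are at most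
`η²`. For every partition of `ℕ` into consecutive intervals, `‖x‖_B²` is then within
`2η(η + ‖x‖_J)` of the same square sum computed with `x` cut off after `K`: the blocks before the
one containing `K` are unchanged, that block changes by at most `η`, and all later blocks
contribute at most `η²`. The truncated quantity only depends on `B ∩ [0, K)`, which is eventually
the same for `Aₙ` and for `B`. -/

def SqSumBoundFrom (x : ℕ → ℝ) (K : ℕ) (ε : ℝ) : Prop :=
  ∀ n (f : Fin n → ℕ × ℕ), Admissible n f → (∀ i, K ≤ (f i).1) →
    ∑ i, (∑ k ∈ Finset.Icc (f i).1 (f i).2, x k) ^ 2 ≤ ε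

theorem Admissible.append {m n : ℕ} {f : Fin m → ℕ × ℕ} {g : Fin n → ℕ × ℕ}
    (hf : Admissible m f) (hg : Admissible n g) (hfg : ∀ i j, (f i).2 < (g j).1) :
    Admissible (m + n) (Fin.append f g) := by
  refine ⟨Fin.addCases (by simpa using hf.1) (by simpa using hg.1), fun i j => ?_⟩
  refine Fin.addCases (fun i => ?_) (fun i => ?_) i <;>
    refine Fin.addCases (fun j => ?_) (fun j => ?_) j <;> intro hij
  · simpa using hf.2 i j hij
  · simpa using hfg i j
  · exact absurd hij (by simp only [Fin.lt_def, Fin.val_natAdd, Fin.val_castAdd]; omega)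
  · simpa using hg.2 i j ((Fin.natAdd_lt_natAdd_iff m).1 hij)

section SquareSums

variable {x : ℕ → ℝ}

theorem MemJ.jamesNorm_nonneg (hx : MemJ x) : 0 ≤ jamesNorm x :=
  le_csSup hx ⟨0, Fin.elim0, ⟨fun i => i.elim0, fun i => i.elim0⟩, by simp⟩

theorem MemJ.sqSumBoundFrom_zero (hx : MemJ x) : SqSumBoundFrom x 0 (jamesNorm x ^ 2) :=
  fun n f hf _ => ((Real.sqrt_le_left hx.jamesNorm_nonneg).1 (le_csSup hx ⟨n, f, hf, rfl⟩))

theorem MemJ.exists_sqSumBoundFrom (hx : MemJ x) {ε : ℝ} (hε : 0 < ε) :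
    ∃ K, SqSumBoundFrom x K ε := by
  by_contra! h
  simp only [SqSumBoundFrom, not_forall, not_le, exists_prop] at h
  have hmany : ∀ m : ℕ, ∃ n, ∃ f : Fin n → ℕ × ℕ, Admissible n f ∧
      m * ε ≤ ∑ i, (∑ k ∈ Finset.Icc (f i).1 (f i).2, x k) ^ 2 := by
    intro m
    induction m with
    | zero => exact ⟨0, Fin.elim0, ⟨fun i => i.elim0, fun i => i.elim0⟩, by simp⟩
    | succ m ih =>
      obtain ⟨n, f, hf, hfm⟩ := ih
      obtain ⟨p, g, hg, hgK, hgε⟩ := h ((Finset.univ.sup fun i => (f i).2) + 1)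
      refine ⟨n + p, Fin.append f g, hf.append hg fun i j => ?_, ?_⟩
      · exact Nat.lt_of_le_of_lt (Finset.le_sup (f := fun i => (f i).2) (Finset.mem_univ i))
          (hgK j)
      · rw [Fin.sum_univ_add]
        simp only [Fin.append_left, Fin.append_right]
        push_cast
        linarith
  obtain ⟨m, hm⟩ := exists_nat_gt (jamesNorm x ^ 2 / ε)
  obtain ⟨n, f, hf, hfm⟩ := hmany m
  have := hx.sqSumBoundFrom_zero n f hf fun _ => Nat.zero_le _
  rw [div_lt_iff₀ hε] at hm
  linarith

theorem SqSumBoundFrom.sum_sq_le {K : ℕ} {ε : ℝ} (hb : SqSumBoundFrom x K ε)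
    {ι : Type*} [LinearOrder ι] (G : Finset ι) (T : ι → Finset ℕ)
    (hconn : ∀ i ∈ G, (T i : Set ℕ).OrdConnected) (hK : ∀ i ∈ G, ∀ k ∈ T i, K ≤ k)
    (hlt : ∀ i ∈ G, ∀ j ∈ G, i < j → ∀ a ∈ T i, ∀ b ∈ T j, a < b) :
    ∑ i ∈ G, (∑ k ∈ T i, x k) ^ 2 ≤ ε := by
  set G' := G.filter fun i => (T i).Nonempty
  have hG' : ∀ i ∈ G', i ∈ G ∧ (T i).Nonempty := fun i hi => Finset.mem_filter.1 hi
  rw [← Finset.sum_filter_of_ne fun i _ hi =>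
    Finset.nonempty_of_sum_ne_zero fun h => hi (by rw [h, zero_pow two_ne_zero])]
  have hIcc : ∀ i ∈ G, ∀ h : (T i).Nonempty, Finset.Icc ((T i).min' h) ((T i).max' h) = T i := by
    refine fun i hi h => Finset.ext fun k => ⟨fun hk => ?_, fun hk => ?_⟩
    · exact Finset.mem_coe.1 ((hconn i hi).out (Finset.min'_mem _ h) (Finset.max'_mem _ h)
        (Finset.mem_Icc.1 hk))
    · exact Finset.mem_Icc.2 ⟨Finset.min'_le _ _ hk, Finset.le_max' _ _ hk⟩
  let e := G'.orderIsoOfFin rfl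
  have hne : ∀ t, (T (e t)).Nonempty := fun t => (hG' _ (e t).2).2
  let f : Fin G'.card → ℕ × ℕ := fun t => ((T (e t)).min' (hne t), (T (e t)).max' (hne t))
  have hf : Admissible _ f := ⟨fun t => Finset.min'_le_max' _ (hne t), fun t t' htt' =>
    hlt _ (hG' _ (e t).2).1 _ (hG' _ (e t').2).1 (e.strictMono htt') _
      (Finset.max'_mem _ (hne t)) _ (Finset.min'_mem _ (hne t'))⟩
  calc ∑ i ∈ G', (∑ k ∈ T i, x k) ^ 2
      = ∑ t, (∑ k ∈ Finset.Icc (f t).1 (f t).2, x k) ^ 2 := by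
        rw [← Finset.sum_coe_sort, ← e.toEquiv.sum_comp]
        refine Finset.sum_congr rfl fun t _ => ?_
        rw [hIcc _ (hG' _ (e t).2).1]
        rfl
    _ ≤ ε := hb _ f hf fun t => hK _ (hG' _ (e t).2).1 _ (Finset.min'_mem _ (hne t))

end SquareSums

section PartialSum

variable (x : ℕ → ℝ) (I : Set ℕ)

noncomputable def partialSum (N : ℕ) : ℝ := ∑ k ∈ Finset.range N, if k ∈ I then x k else 0

theorem partialSum_zero : partialSum x I 0 = 0 := Finset.sum_range_zero _

theorem partialSum_sub {N M : ℕ} (h : N ≤ M) :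
    partialSum x I M - partialSum x I N = ∑ k ∈ (Finset.Ico N M).filter (· ∈ I), x k := by
  rw [Finset.sum_filter, Finset.sum_Ico_eq_sub _ h]
  rfl

variable {x I}

theorem partialSum_congr {I' : Set ℕ} {N : ℕ} (h : ∀ k < N, (k ∈ I ↔ k ∈ I')) :
    partialSum x I N = partialSum x I' N :=
  Finset.sum_congr rfl fun k hk => by simp only [h k (Finset.mem_range.1 hk)]

theorem partialSum_eq_zero {N : ℕ} (h : ∀ k < N, k ∉ I) : partialSum x I N = 0 :=
  Finset.sum_eq_zero fun k hk => if_neg (h k (Finset.mem_range.1 hk))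

theorem setSum_eq_partialSum {N : ℕ} (h : ∀ k ∈ I, k < N) : setSum x I = partialSum x I N := by
  refine (tendsto_atTop_of_eventually_const (i₀ := N) fun M hM => ?_).limUnder_eq
  refine sub_eq_zero.1 ((partialSum_sub x I hM).trans (Finset.sum_eq_zero fun k hk => ?_))
  rw [Finset.mem_filter, Finset.mem_Ico] at hk
  exact absurd (h k hk.2) (by omega)

end PartialSum

section Fibre

variable {x : ℕ → ℝ} {c : ℕ → ℕ}

theorem SqSumBoundFrom.sum_sq_partialSum_sub_le {K N M : ℕ} {ε : ℝ}
    (hb : SqSumBoundFrom x K ε) (hc : Monotone c) (hKN : K ≤ N) (hNM : N ≤ M)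
    (G : Finset ℕ) :
    ∑ i ∈ G, (partialSum x (c ⁻¹' {i}) M - partialSum x (c ⁻¹' {i}) N) ^ 2 ≤ ε := by
  simp_rw [partialSum_sub x _ hNM]
  refine hb.sum_sq_le G _ (fun i _ => ?_) (fun i _ k hk => ?_) fun i _ j _ hij a ha b hb => ?_
  · simp only [Finset.coe_filter, Finset.mem_Ico]
    exact Set.ordConnected_Ico.inter (Set.ordConnected_singleton.preimage_mono hc)
  · exact hKN.trans (Finset.mem_Ico.1 (Finset.mem_filter.1 hk).1).1
  · simp only [Finset.mem_filter, Set.mem_preimage, Set.mem_singleton_iff] at ha hb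
    by_contra! hba
    exact absurd (hc hba) (by omega)

theorem MemJ.tendsto_partialSum (hx : MemJ x) (hc : Monotone c) (i : ℕ) :
    Tendsto (partialSum x (c ⁻¹' {i})) atTop (𝓝 (setSum x (c ⁻¹' {i}))) := by
  refine CauchySeq.tendsto_limUnder (Metric.cauchySeq_iff'.2 fun ε hε => ?_)
  obtain ⟨K, hK⟩ := hx.exists_sqSumBoundFrom (pow_pos (half_pos hε) 2)
  refine ⟨K, fun M hM => ?_⟩
  have := hK.sum_sq_partialSum_sub_le hc le_rfl hM {i}
  rw [Finset.sum_singleton] at this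
  rw [Real.dist_eq]
  exact (abs_le_of_sq_le_sq this (half_pos hε).le).trans_lt (half_lt_self hε)

theorem MemJ.sum_sq_setSum_sub_le (hx : MemJ x) (hc : Monotone c) {K N : ℕ} {ε : ℝ}
    (hb : SqSumBoundFrom x K ε) (hKN : K ≤ N) (G : Finset ℕ) :
    ∑ i ∈ G, (setSum x (c ⁻¹' {i}) - partialSum x (c ⁻¹' {i}) N) ^ 2 ≤ ε :=
  le_of_tendsto (tendsto_finsetSum G fun i _ => ((hx.tendsto_partialSum hc i).sub_const _).pow 2)
    (eventually_atTop.2 ⟨N, fun _ hM => hb.sum_sq_partialSum_sub_le hc hKN hM G⟩)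

theorem MemJ.summable_sq_setSum (hx : MemJ x) (hc : Monotone c) :
    Summable fun i => setSum x (c ⁻¹' {i}) ^ 2 :=
  summable_of_sum_range_le (fun _ => sq_nonneg _) fun n => by
    simpa [partialSum_zero] using
      hx.sum_sq_setSum_sub_le hc hx.sqSumBoundFrom_zero le_rfl (Finset.range n)

end Fibre

theorem abs_tsum_sq_sub_sum_sq_le {s p : ℕ → ℝ} (hs : Summable fun i => s i ^ 2) {j : ℕ}
    {η C : ℝ} (hη : 0 ≤ η) (hC : 0 ≤ C) (hbelow : ∀ i < j, s i = p i)
    (hdev : (s j - p j) ^ 2 ≤ η ^ 2) (hp : p j ^ 2 ≤ C ^ 2)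
    (htail : ∑' i, s (i + (j + 1)) ^ 2 ≤ η ^ 2) :
    |∑' i, s i ^ 2 - ∑ i ∈ Finset.range (j + 1), p i ^ 2| ≤ 2 * η * (η + C) := by
  have hsplit : ∑' i, s i ^ 2 - ∑ i ∈ Finset.range (j + 1), p i ^ 2 =
      (s j - p j) ^ 2 + 2 * ((s j - p j) * p j) + ∑' i, s (i + (j + 1)) ^ 2 := by
    rw [← hs.sum_add_tsum_nat_add (j + 1), Finset.sum_range_succ, Finset.sum_range_succ,
      Finset.sum_congr rfl fun i hi => by rw [hbelow i (Finset.mem_range.1 hi)]]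
    ring
  have hprod : |(s j - p j) * p j| ≤ η * C := by
    rw [abs_mul]
    exact mul_le_mul (abs_le_of_sq_le_sq hdev hη) (abs_le_of_sq_le_sq hp hC) (abs_nonneg _) hη
  have htail0 : 0 ≤ ∑' i, s (i + (j + 1)) ^ 2 := tsum_nonneg fun _ => sq_nonneg _
  rw [hsplit, abs_le]
  constructor <;> nlinarith [abs_le.1 hprod, sq_nonneg (s j - p j)]

section FibreSqSum

variable {x : ℕ → ℝ}

noncomputable def fibreSqSum (x : ℕ → ℝ) (c : ℕ → ℕ) : ℝ := ∑' i, setSum x (c ⁻¹' {i}) ^ 2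

noncomputable def truncFibreSqSum (x : ℕ → ℝ) (c : ℕ → ℕ) (K : ℕ) : ℝ :=
  ∑ i ∈ Finset.range (c K + 1), partialSum x (c ⁻¹' {i}) (K + 1) ^ 2

theorem truncFibreSqSum_congr {c c' : ℕ → ℕ} {K : ℕ} (h : ∀ k ≤ K, c k = c' k) :
    truncFibreSqSum x c K = truncFibreSqSum x c' K := by
  rw [truncFibreSqSum, truncFibreSqSum, h K le_rfl]
  refine Finset.sum_congr rfl fun i _ => ?_
  rw [partialSum_congr (I' := c' ⁻¹' {i}) fun k hk => by
    simp only [Set.mem_preimage, h k (by omega)]]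

theorem MemJ.abs_fibreSqSum_sub_truncFibreSqSum_le (hx : MemJ x) {c : ℕ → ℕ} (hc : Monotone c)
    {K : ℕ} {η : ℝ} (hη : 0 ≤ η) (hb : SqSumBoundFrom x K (η ^ 2)) :
    |fibreSqSum x c - truncFibreSqSum x c K| ≤ 2 * η * (η + jamesNorm x) := by
  have hbelow : ∀ i < c K, setSum x (c ⁻¹' {i}) = partialSum x (c ⁻¹' {i}) (K + 1) :=
    fun i hi => setSum_eq_partialSum fun k hk => by
      by_contra! hKk
      exact absurd (hc (show K ≤ k by omega)) (by rw [hk]; omega)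
  have habove : ∀ i, c K < i → partialSum x (c ⁻¹' {i}) (K + 1) = 0 :=
    fun i hi => partialSum_eq_zero fun k hk hki =>
      absurd (hc (show k ≤ K by omega)) (by rw [hki]; omega)
  have htail : ∑' i, setSum x (c ⁻¹' {i + (c K + 1)}) ^ 2 ≤ η ^ 2 := by
    refine ((hx.summable_sq_setSum hc).comp_injective (add_left_injective (c K + 1))
      ).tsum_le_of_sum_range_le fun n => ?_
    have := hx.sum_sq_setSum_sub_le hc hb (Nat.le_add_right K 1)
      (Finset.Ico (c K + 1) (c K + 1 + n))
    rw [Finset.sum_Ico_eq_sum_range, Nat.add_sub_cancel_left] at this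
    refine le_of_eq_of_le (Finset.sum_congr rfl fun i _ => ?_) this
    rw [Function.comp_apply, habove _ (by omega), sub_zero, add_comm i]
  exact abs_tsum_sq_sub_sum_sq_le (hx.summable_sq_setSum hc) hη hx.jamesNorm_nonneg hbelow
    (by simpa using hx.sum_sq_setSum_sub_le hc hb (Nat.le_add_right K 1) {c K})
    (by simpa [partialSum_zero] using
      hx.sqSumBoundFrom_zero.sum_sq_partialSum_sub_le hc le_rfl (Nat.zero_le (K + 1)) {c K})
    htail

end FibreSqSum

theorem MemJ.tendsto_fibreSqSum {x : ℕ → ℝ} (hx : MemJ x) {α : Type*} {l : Filter α}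
    {c : α → ℕ → ℕ} {c₀ : ℕ → ℕ} (hc : ∀ a, Monotone (c a)) (hc₀ : Monotone c₀)
    (hlim : ∀ k, ∀ᶠ a in l, c a k = c₀ k) :
    Tendsto (fun a => fibreSqSum x (c a)) l (𝓝 (fibreSqSum x c₀)) := by
  refine Metric.tendsto_nhds.2 fun δ hδ => ?_
  have herr : Tendsto (fun η => 4 * η * (η + jamesNorm x)) (𝓝[>] 0) (𝓝 0) := by
    simpa using ((by fun_prop : Continuous fun η : ℝ => 4 * η * (η + jamesNorm x)).tendsto 0
      ).mono_left nhdsWithin_le_nhds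
  obtain ⟨η, hηδ, hη⟩ := ((herr.eventually (gt_mem_nhds hδ)).and self_mem_nhdsWithin).exists
  obtain ⟨K, hK⟩ := hx.exists_sqSumBoundFrom (pow_pos hη 2)
  filter_upwards [(Finset.range (K + 1)).eventually_all.2 fun k _ => hlim k] with a ha
  have htrunc : truncFibreSqSum x (c a) K = truncFibreSqSum x c₀ K :=
    truncFibreSqSum_congr fun k hk => ha k (Finset.mem_range.2 (Nat.lt_succ_of_le hk))
  have hA := hx.abs_fibreSqSum_sub_truncFibreSqSum_le (hc a) hη.le hK
  have hB := hx.abs_fibreSqSum_sub_truncFibreSqSum_le hc₀ hη.le hK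
  rw [Real.dist_eq]
  calc |fibreSqSum x (c a) - fibreSqSum x c₀|
      ≤ |fibreSqSum x (c a) - truncFibreSqSum x (c a) K| +
          |fibreSqSum x c₀ - truncFibreSqSum x c₀ K| := by
        rw [htrunc, abs_sub_comm (fibreSqSum x c₀)]
        exact abs_sub_le _ _ _
    _ < δ := by linarith

-- `cutBlock B i` is, by definition, the fibre `cutCount B ⁻¹' {i}`.
noncomputable def cutCount (B : Set ℕ) (k : ℕ) : ℕ := (B ∩ Set.Iio k).ncard

theorem monotone_cutCount (B : Set ℕ) : Monotone (cutCount B) := fun _ b hab =>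
  Set.ncard_le_ncard (Set.inter_subset_inter_right _ (Set.Iio_subset_Iio hab))
    ((Set.finite_Iio b).inter_of_right B)

theorem cutCount_congr {A B : Set ℕ} {k : ℕ} (h : ∀ m < k, (m ∈ A ↔ m ∈ B)) :
    cutCount A k = cutCount B k := by
  rw [cutCount, cutCount, Set.inter_comm, Set.inter_comm B]
  congr 1
  ext m
  simp only [Set.mem_inter_iff, Set.mem_Iio]
  exact and_congr_right (h m)

open Filter Topology in
theorem stmt12_general (x : ℕ → ℝ) (hx : MemJ x)
    (A : ℕ → Set ℕ)
    (B : Set ℕ) (hconv : ∀ k : ℕ, ∃ N, ∀ n ≥ N, (k ∈ A n ↔ k ∈ B)) :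
    Tendsto (fun n => normEst x (A n)) atTop (𝓝 (normEst x B)) := by
  have hcount : ∀ k, ∀ᶠ n in atTop, cutCount (A n) k = cutCount B k := fun k =>
    ((Finset.range k).eventually_all.2 fun m _ => eventually_atTop.2 (hconv m)).mono
      fun n hn => cutCount_congr fun m hm => hn m (Finset.mem_range.2 hm)
  exact (Real.continuous_sqrt.tendsto _).comp
    (hx.tendsto_fibreSqSum (fun n => monotone_cutCount (A n)) (monotone_cutCount B) hcount)

open Filter Topology in
theorem stmt12 (x : ℕ → ℝ) (hx : MemJ x) (hsupp : supp x = Set.univ)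
    (A : ℕ → Set ℕ) (hfin : ∀ n, (A n).Finite) (hne : ∀ n, (A n).Nonempty)
    (B : Set ℕ) (hconv : ∀ k : ℕ, ∃ N, ∀ n ≥ N, (k ∈ A n ↔ k ∈ B)) :
    Tendsto (fun n => normEst x (A n)) atTop (𝓝 (normEst x B)) :=
  stmt12_general x hx A B hconv
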